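/- arXiv:2412.12769 — 2 statements merged into one kernel-verified Lean document; each statement's English description precedes it below -/
import Mathlib

section
/- Let $X_0, X_1$ be quasi-Banach function spaces over $\Omega$ and $\theta \in (0,1)$. If $X_0$ is order continuous, then the Calderón product $X_0^{1-\theta} X_1^{\theta}$ is order continuous. -/
open MeasureTheory Filter Topology Finset

noncomputable section

/-- A quasi-Banach function space over a measure space `(α, μ)`:
a quasi-Banach space of (a.e. classes of) measurable functions with a weak
order unit and the lattice property. -/
structure QBFS (α : Type*) [MeasurableSpace α] (μ : MeasureTheory.Measure α) where
  Mem : (α → ℂ) → Prop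
  qnorm : (α → ℂ) → ℝ
  Cq : ℝ
  one_le_Cq : 1 ≤ Cq
  mem_aemeasurable : ∀ f, Mem f → AEMeasurable f μ
  mem_congr : ∀ f g, Mem f → f =ᵐ[μ] g → Mem g
  qnorm_congr : ∀ f g, f =ᵐ[μ] g → qnorm f = qnorm g
  qnorm_nonneg : ∀ f, 0 ≤ qnorm f
  qnorm_eq_zero_iff : ∀ f, Mem f → (qnorm f = 0 ↔ f =ᵐ[μ] 0)
  qnorm_smul : ∀ (c : ℂ) (f), qnorm (c • f) = ‖c‖ * qnorm f
  add_mem : ∀ f g, Mem f → Mem g → Mem (f + g)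
  smul_mem : ∀ (c : ℂ) (f), Mem f → Mem (c • f)
  qnorm_add_le : ∀ f g, Mem f → Mem g → qnorm (f + g) ≤ Cq * (qnorm f + qnorm g)
  exists_weak_unit : ∃ f, Mem f ∧ ∀ᵐ ω ∂μ, 0 < ‖f ω‖
  lattice_mem : ∀ f g, Mem f → AEMeasurable g μ →
    (∀ᵐ ω ∂μ, ‖g ω‖ ≤ ‖f ω‖) → Mem g
  lattice_qnorm : ∀ f g, Mem f →
    (∀ᵐ ω ∂μ, ‖g ω‖ ≤ ‖f ω‖) → qnorm g ≤ qnorm f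
  complete : ∀ u : ℕ → α → ℂ, (∀ n, Mem (u n)) →
    (∀ ε : ℝ, 0 < ε → ∃ N, ∀ m ≥ N, ∀ n ≥ N, qnorm (u m - u n) ≤ ε) →
    ∃ f, Mem f ∧ Tendsto (fun n => qnorm (u n - f)) atTop (𝓝 0)

variable {α : Type*} [MeasurableSpace α] {μ : MeasureTheory.Measure α}

/-- Membership in the sum space `X₀ + X₁`. -/
def SumMem (X0 X1 : QBFS α μ) (f : α → ℂ) : Prop :=
  ∃ f0 f1, X0.Mem f0 ∧ X1.Mem f1 ∧ f =ᵐ[μ] f0 + f1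

/-- The set of numbers `‖f₀‖ + ‖f₁‖` over decompositions `f = f₀ + f₁`. -/
def sumNormSet (X0 X1 : QBFS α μ) (f : α → ℂ) : Set ℝ :=
  {r | ∃ f0 f1, X0.Mem f0 ∧ X1.Mem f1 ∧ f =ᵐ[μ] f0 + f1 ∧
    r = X0.qnorm f0 + X1.qnorm f1}

/-- The quasi-norm of the sum space `X₀ + X₁`. -/
def sumNorm (X0 X1 : QBFS α μ) (f : α → ℂ) : ℝ := sInf (sumNormSet X0 X1 f)

/-- The set of numbers `‖f₀‖^(1-θ) ‖f₁‖^θ` over factorizations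
`|f| ≤ |f₀|^(1-θ) |f₁|^θ` a.e. -/
def calSet (X0 X1 : QBFS α μ) (θ : ℝ) (f : α → ℂ) : Set ℝ :=
  {r | ∃ f0 f1, X0.Mem f0 ∧ X1.Mem f1 ∧
    (∀ᵐ ω ∂μ, ‖f ω‖ ≤
      ‖f0 ω‖ ^ (1 - θ) * ‖f1 ω‖ ^ θ) ∧
    r = X0.qnorm f0 ^ (1 - θ) * X1.qnorm f1 ^ θ}

/-- Membership in the Calderón product `X₀^(1-θ) X₁^θ`. -/
def CalMem (X0 X1 : QBFS α μ) (θ : ℝ) (f : α → ℂ) : Prop :=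
  AEMeasurable f μ ∧ (calSet X0 X1 θ f).Nonempty

/-- The quasi-norm of the Calderón product `X₀^(1-θ) X₁^θ`. -/
def calNorm (X0 X1 : QBFS α μ) (θ : ℝ) (f : α → ℂ) : ℝ := sInf (calSet X0 X1 θ f)

/-- Order continuity of a function space given by a membership predicate and a
quasi-norm: whenever a sequence of nonnegative members decreases pointwise
a.e. to `0`, its quasi-norms tend to `0`. -/
def OrderContFS (μ : MeasureTheory.Measure α) (Mem : (α → ℂ) → Prop)
    (q : (α → ℂ) → ℝ) : Prop :=
  ∀ f : ℕ → α → ℂ, (∀ n, Mem (f n)) →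
    (∀ᵐ ω ∂μ, (∀ n, (f n ω).im = 0 ∧ 0 ≤ (f n ω).re ∧
        (f (n + 1) ω).re ≤ (f n ω).re) ∧
      Tendsto (fun n => (f n ω).re) atTop (𝓝 0)) →
    Tendsto (fun n => q (f n)) atTop (𝓝 0)

/-!
Factor `|f₀| ≤ |g₀|^(1-θ) |g₁|^θ` with `g₀ ∈ X₀`, `g₁ ∈ X₁`. Keeping `g₁`, each `f_n` has the
factorization `|f_n| ≤ h_n^(1-θ) |g₁|^θ` with `h_n = min(|g₀|, t_n)`, where `t_n` solves
`|f_n| = t_n^(1-θ) |g₁|^θ`. The `h_n` lie below `|g₀|` and decrease to `0` with `f_n`, so order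
continuity of `X₀` gives `‖h_n‖_{X₀} → 0`, hence `‖f_n‖ ≤ ‖h_n‖_{X₀}^(1-θ) ‖g₁‖_{X₁}^θ → 0`.
-/

/-- The `t ≥ 0` with `t ^ (1 - θ) * c ^ θ = a`, for `c > 0`. -/
def calFactor (θ c a : ℝ) : ℝ := a ^ (1 / (1 - θ)) * c ^ (-(θ / (1 - θ)))

section calFactor

variable {θ c a : ℝ}

lemma calFactor_nonneg (ha : 0 ≤ a) (hc : 0 ≤ c) : 0 ≤ calFactor θ c a :=
  mul_nonneg (Real.rpow_nonneg ha _) (Real.rpow_nonneg hc _)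

lemma calFactor_rpow_mul_rpow (hθ : θ < 1) (ha : 0 ≤ a) (hc : 0 < c) :
    calFactor θ c a ^ (1 - θ) * c ^ θ = a := by
  have h1θ : 1 - θ ≠ 0 := by linarith
  have hexp : -(θ / (1 - θ)) * (1 - θ) + θ = 0 := by field_simp; ring
  rw [calFactor, Real.mul_rpow (Real.rpow_nonneg ha _) (Real.rpow_nonneg hc.le _),
    ← Real.rpow_mul ha, ← Real.rpow_mul hc.le, one_div_mul_cancel h1θ, Real.rpow_one,
    mul_assoc, ← Real.rpow_add hc, hexp, Real.rpow_zero, mul_one]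

lemma calFactor_le_calFactor {b : ℝ} (hθ : θ < 1) (hc : 0 ≤ c) (ha : 0 ≤ a) (hab : a ≤ b) :
    calFactor θ c a ≤ calFactor θ c b := by
  have hp : 0 ≤ 1 / (1 - θ) := by rw [one_div_nonneg]; linarith
  exact mul_le_mul_of_nonneg_right (Real.rpow_le_rpow ha hab hp)
    (Real.rpow_nonneg hc _)

lemma tendsto_calFactor_zero (hθ : θ < 1) {u : ℕ → ℝ} (hu : Tendsto u atTop (𝓝 0)) :
    Tendsto (fun n => calFactor θ c (u n)) atTop (𝓝 0) := by
  have hp : 0 < 1 / (1 - θ) := by rw [one_div_pos]; linarith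
  have := (hu.rpow_const (Or.inr hp.le)).mul_const (c ^ (-(θ / (1 - θ))))
  rwa [Real.zero_rpow hp.ne', zero_mul] at this

lemma le_min_calFactor_rpow_mul_rpow (hθ : θ ∈ Set.Ioo (0 : ℝ) 1) (ha : 0 ≤ a) (hc : 0 ≤ c)
    {b : ℝ} (h : a ≤ b ^ (1 - θ) * c ^ θ) :
    a ≤ min b (calFactor θ c a) ^ (1 - θ) * c ^ θ := by
  rcases hc.eq_or_lt with rfl | hc
  · simpa [Real.zero_rpow hθ.1.ne'] using h
  rcases le_total b (calFactor θ c a) with hb | hb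
  · rwa [min_eq_left hb]
  · rw [min_eq_right hb, calFactor_rpow_mul_rpow hθ.2 ha hc]

lemma antitone_min_calFactor {b : ℝ} {u : ℕ → ℝ} (hθ : θ < 1) (hc : 0 ≤ c)
    (hu0 : ∀ n, 0 ≤ u n) (hu : Antitone u) :
    Antitone fun n => min b (calFactor θ c (u n)) := fun _ _ hmn =>
  min_le_min le_rfl (calFactor_le_calFactor hθ hc (hu0 _) (hu hmn))

lemma tendsto_min_calFactor_zero {b : ℝ} {u : ℕ → ℝ} (hθ : θ < 1) (hb : 0 ≤ b)
    (hc : 0 ≤ c) (hu0 : ∀ n, 0 ≤ u n) (hu : Tendsto u atTop (𝓝 0)) :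
    Tendsto (fun n => min b (calFactor θ c (u n))) atTop (𝓝 0) :=
  squeeze_zero (fun n => le_min hb (calFactor_nonneg (hu0 n) hc)) (fun _ => min_le_right _ _)
    (tendsto_calFactor_zero hθ hu)

end calFactor

lemma OrderContFS.tendsto_qnorm_ofReal {Mem : (α → ℂ) → Prop} {q : (α → ℂ) → ℝ}
    (hX : OrderContFS μ Mem q) (u : ℕ → α → ℝ) (hu : ∀ n, Mem fun ω => (u n ω : ℂ))
    (hae : ∀ᵐ ω ∂μ, (∀ n, 0 ≤ u n ω) ∧ Antitone (u · ω) ∧ Tendsto (u · ω) atTop (𝓝 0)) :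
    Tendsto (fun n => q fun ω => (u n ω : ℂ)) atTop (𝓝 0) := by
  refine hX _ hu ?_
  filter_upwards [hae] with ω ⟨hu0, hanti, hlim⟩
  simpa using ⟨fun n => ⟨hu0 n, hanti n.le_succ⟩, hlim⟩

lemma ae_antitone_norm_and_tendsto_zero {f : ℕ → α → ℂ}
    (hae : ∀ᵐ ω ∂μ, (∀ n, (f n ω).im = 0 ∧ 0 ≤ (f n ω).re ∧
        (f (n + 1) ω).re ≤ (f n ω).re) ∧
      Tendsto (fun n => (f n ω).re) atTop (𝓝 0)) :
    ∀ᵐ ω ∂μ, Antitone (‖f · ω‖) ∧ Tendsto (‖f · ω‖) atTop (𝓝 0) := by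
  filter_upwards [hae] with ω ⟨hf, hlim⟩
  have hnorm : ∀ n, ‖f n ω‖ = (f n ω).re := fun n =>
    (Complex.re_eq_norm.2 (Complex.nonneg_iff.2 ⟨(hf n).2.1, (hf n).1.symm⟩)).symm
  simp_rw [hnorm]
  exact ⟨antitone_nat_of_succ_le fun n => (hf n).2.2, hlim⟩

section Calderon

variable {X0 X1 : QBFS α μ} {θ : ℝ} {f : α → ℂ}

lemma nonneg_of_mem_calSet {r : ℝ} (hr : r ∈ calSet X0 X1 θ f) : 0 ≤ r := by
  obtain ⟨f0, f1, -, -, -, rfl⟩ := hr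
  exact mul_nonneg (Real.rpow_nonneg (X0.qnorm_nonneg _) _)
    (Real.rpow_nonneg (X1.qnorm_nonneg _) _)

lemma calNorm_nonneg : 0 ≤ calNorm X0 X1 θ f :=
  Real.sInf_nonneg fun _ => nonneg_of_mem_calSet

lemma calNorm_le {g0 g1 : α → ℂ} (hg0 : X0.Mem g0) (hg1 : X1.Mem g1)
    (hfac : ∀ᵐ ω ∂μ, ‖f ω‖ ≤ ‖g0 ω‖ ^ (1 - θ) * ‖g1 ω‖ ^ θ) :
    calNorm X0 X1 θ f ≤ X0.qnorm g0 ^ (1 - θ) * X1.qnorm g1 ^ θ :=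
  csInf_le ⟨0, fun _ => nonneg_of_mem_calSet⟩ ⟨g0, g1, hg0, hg1, hfac, rfl⟩

end Calderon

/-- If `X₀` is order continuous, then the Calderón product `X₀^(1-θ) X₁^θ` is
order continuous. -/
theorem calderon_product_order_continuous (X0 X1 : QBFS α μ) (θ : ℝ)
    (hθ : θ ∈ Set.Ioo (0 : ℝ) 1)
    (h0 : OrderContFS μ X0.Mem X0.qnorm) :
    OrderContFS μ (CalMem X0 X1 θ) (calNorm X0 X1 θ) := by
  intro f hmem hae
  obtain ⟨-, g0, g1, hg0, hg1, hfac, -⟩ := (hmem 0).2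
  set h : ℕ → α → ℝ := fun n ω => min ‖g0 ω‖ (calFactor θ ‖g1 ω‖ ‖f n ω‖) with h_def
  have h_nonneg : ∀ n ω, 0 ≤ h n ω := fun n ω =>
    le_min (norm_nonneg _) (calFactor_nonneg (norm_nonneg _) (norm_nonneg _))
  have norm_h : ∀ n ω, ‖(h n ω : ℂ)‖ = h n ω := fun n ω => Complex.norm_of_nonneg (h_nonneg n ω)
  have hf := ae_antitone_norm_and_tendsto_zero hae
  have h_mem : ∀ n, X0.Mem fun ω => (h n ω : ℂ) := by
    intro n
    have hg0_meas := X0.mem_aemeasurable _ hg0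
    have hg1_meas := X1.mem_aemeasurable _ hg1
    have hf_meas := (hmem n).1
    refine X0.lattice_mem g0 _ hg0 (by simp only [h_def, calFactor]; fun_prop) ?_
    exact Eventually.of_forall fun ω => (norm_h n ω).trans_le (min_le_left _ _)
  have h_tendsto : Tendsto (fun n => X0.qnorm fun ω => (h n ω : ℂ)) atTop (𝓝 0) := by
    refine h0.tendsto_qnorm_ofReal h h_mem ?_
    filter_upwards [hf] with ω ⟨hanti, hlim⟩
    exact ⟨(h_nonneg · ω), antitone_min_calFactor hθ.2 (norm_nonneg _) (fun _ => norm_nonneg _)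
      hanti, tendsto_min_calFactor_zero hθ.2 (norm_nonneg _) (norm_nonneg _)
      (fun _ => norm_nonneg _) hlim⟩
  have h_fac : ∀ n, ∀ᵐ ω ∂μ, ‖f n ω‖ ≤ ‖(h n ω : ℂ)‖ ^ (1 - θ) * ‖g1 ω‖ ^ θ := fun n => by
    filter_upwards [hf, hfac] with ω hω hfac0
    rw [norm_h]
    exact le_min_calFactor_rpow_mul_rpow hθ (norm_nonneg _) (norm_nonneg _)
      ((hω.1 (Nat.zero_le n)).trans hfac0)
  refine squeeze_zero (fun _ => calNorm_nonneg) (fun n => calNorm_le (h_mem n) hg1 (h_fac n)) ?_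
  have h1θ : 0 < 1 - θ := sub_pos.2 hθ.2
  simpa [Real.zero_rpow h1θ.ne'] using
    (h_tendsto.rpow_const (Or.inr h1θ.le)).mul_const (X1.qnorm g1 ^ θ)
end
end

section
/- Let $X$ be a quasi-Banach function space over a separable and $\sigma$-finite measure space $\Omega$. Then $X$ is separable (as a topological space) if and only if $X$ is order continuous. -/
/-!
Both conditions are equivalent to absolute continuity of the quasi-norm: `‖h 1_{E n}‖ → 0`
whenever `E n` decreases to a null set.

Order continuity applied to `|h| 1_{E n}` gives absolute continuity. Conversely, if `f n ↓ 0`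
then `|f n| ≤ δ |f 0| + |f 0| 1_{E n}` where `E n = {|f k| > δ |f 0| for all k ≤ n}` decreases to
a null set, so `limsup ‖f n‖ ≤ C δ ‖f 0‖`.

If the quasi-norm is not absolutely continuous, some `h 1_{E n}` is not Cauchy (a Cauchy sequence
converging a.e. converges in `X` to its a.e. limit). This produces disjoint sets `B i` with
`‖h 1_{B i}‖ ≥ c`, and the functions `h 1_{⋃ i ∈ S, B i}`, `S ⊆ ℕ`, are uncountably many and
pairwise `c`-apart, so `X` is not separable.

Conversely, under absolute continuity every `f` is close to its restriction to a set `G N` of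
finite measure on which the weak unit is at least `1 / (N + 1)`, hence to a finite combination
`∑ c j 1_{S j}` with `f` nearly constant on each `S j` and `c j` from a countable dense subset
of `ℂ`. Absolute continuity makes `‖1_S‖` small when `μ S` is small, so the separability of `μ`
lets each `S j` be replaced by a set from a fixed countable family.
-/

open MeasureTheory Filter Topology Finset

noncomputable section

variable {α : Type*} [MeasurableSpace α] {μ : MeasureTheory.Measure α}

/-- Topological separability of a (quasi-normed) function space given by a
membership predicate and a quasi-norm: there is a countable subset which is
dense with respect to the quasi-norm. -/
def SeparableFS (Mem : (α → ℂ) → Prop) (q : (α → ℂ) → ℝ) : Prop :=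
  ∃ D : Set (α → ℂ), D.Countable ∧ (∀ d ∈ D, Mem d) ∧
    ∀ f, Mem f → ∀ ε : ℝ, 0 < ε → ∃ d ∈ D, q (f - d) < ε

/-- A measure space is separable if some sequence of measurable sets
approximates every measurable set of finite measure in measure. -/
def MeasSeparable (μ : MeasureTheory.Measure α) : Prop :=
  ∃ A : ℕ → Set α, (∀ n, MeasurableSet (A n)) ∧
    ∀ E : Set α, MeasurableSet E → μ E < ⊤ → ∀ ε : ENNReal, 0 < ε →
      ∃ n, μ (symmDiff (A n) E) < ε

namespace QBFS

open Set Function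
open scoped ENNReal

variable (X : QBFS α μ)

lemma Cq_pos : 0 < X.Cq := zero_lt_one.trans_le X.one_le_Cq

lemma Cq_mul_add_lt {a b ε : ℝ} (ha : a < ε / (2 * X.Cq)) (hb : b < ε / (2 * X.Cq)) :
    X.Cq * (a + b) < ε := by
  have hC := X.Cq_pos
  calc X.Cq * (a + b) < X.Cq * (ε / (2 * X.Cq) + ε / (2 * X.Cq)) := by gcongr
    _ = ε := by field_simp; ring

lemma mem_zero : X.Mem 0 := by
  obtain ⟨w, hw, -⟩ := X.exists_weak_unit
  simpa using X.smul_mem 0 w hw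

lemma qnorm_zero : X.qnorm 0 = 0 := by
  simpa using X.qnorm_smul 0 0

lemma mem_sub {f g : α → ℂ} (hf : X.Mem f) (hg : X.Mem g) : X.Mem (f - g) := by
  simpa [sub_eq_add_neg] using X.add_mem _ _ hf (X.smul_mem (-1) g hg)

lemma qnorm_sub_comm (f g : α → ℂ) : X.qnorm (f - g) = X.qnorm (g - f) := by
  simpa using X.qnorm_smul (-1) (g - f)

lemma qnorm_sub_le {f g h : α → ℂ} (hf : X.Mem f) (hg : X.Mem g) (hh : X.Mem h) :
    X.qnorm (f - h) ≤ X.Cq * (X.qnorm (f - g) + X.qnorm (g - h)) := by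
  simpa using X.qnorm_add_le _ _ (X.mem_sub hf hg) (X.mem_sub hg hh)

lemma mem_indicator {f : α → ℂ} (hf : X.Mem f) {s : Set α} (hs : NullMeasurableSet s μ) :
    X.Mem (s.indicator f) :=
  X.lattice_mem f _ hf ((X.mem_aemeasurable f hf).indicator₀ hs)
    (Eventually.of_forall fun _ => norm_indicator_le_norm_self _ _)

lemma mem_indicator_one_of_subset {s t : Set α} (ht : X.Mem (t.indicator 1))
    (hs : MeasurableSet s) (hst : s ⊆ t) : X.Mem (s.indicator 1) := by
  simpa [indicator_indicator, inter_eq_left.2 hst] using X.mem_indicator ht hs.nullMeasurableSet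

theorem ae_eq_zero_of_tendsto_qnorm {z : ℕ → α → ℂ} {g : α → ℂ} (hz : ∀ n, X.Mem (z n))
    (hq : Tendsto (fun n => X.qnorm (z n)) atTop (𝓝 0))
    (hg : ∀ᵐ ω ∂μ, Tendsto (fun n => z n ω) atTop (𝓝 (g ω))) : g =ᵐ[μ] 0 := by
  -- the tail infima `v I` of `‖z‖` are null, while `‖g‖ ≤ 2 v I` for large `I`
  set v : ℕ → α → ℂ := fun I ω => ((⨅ i, ‖z (i + I) ω‖ : ℝ) : ℂ)
  have hv_norm : ∀ I ω, ‖v I ω‖ = ⨅ i, ‖z (i + I) ω‖ := fun I ω =>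
    by simp [v, Real.norm_of_nonneg (le_ciInf fun _ => norm_nonneg _)]
  have hv_le : ∀ I i ω, ‖v I ω‖ ≤ ‖z (i + I) ω‖ := fun I i ω =>
    (hv_norm I ω).trans_le (ciInf_le ⟨0, by rintro _ ⟨j, rfl⟩; positivity⟩ i)
  have hv_zero : ∀ I, v I =ᵐ[μ] 0 := fun I => by
    have hmem : X.Mem (v I) := X.lattice_mem (z (0 + I)) _ (hz (0 + I))
      (Complex.measurable_ofReal.comp_aemeasurable
        (AEMeasurable.iInf fun i => (X.mem_aemeasurable _ (hz (i + I))).norm))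
      (Eventually.of_forall (hv_le I 0))
    refine (X.qnorm_eq_zero_iff _ hmem).1 (le_antisymm ?_ (X.qnorm_nonneg _))
    exact ge_of_tendsto' ((tendsto_add_atTop_iff_nat I).2 hq)
      fun i => X.lattice_qnorm _ _ (hz _) (Eventually.of_forall (hv_le I i))
  filter_upwards [hg, ae_all_iff.2 hv_zero] with ω hω hv
  by_contra hne
  have hpos : 0 < ‖g ω‖ := norm_pos_iff.2 hne
  obtain ⟨I, hI⟩ := eventually_atTop.1
    ((tendsto_norm.comp hω).eventually (lt_mem_nhds (half_lt_self hpos)))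
  have : ‖g ω‖ / 2 ≤ ‖v I ω‖ :=
    (hv_norm I ω).symm ▸ le_ciInf fun i => (hI (i + I) (Nat.le_add_left I i)).le
  simp [hv I] at this
  linarith

theorem tendsto_qnorm_sub_of_cauchy {u : ℕ → α → ℂ} {g : α → ℂ} (hu : ∀ n, X.Mem (u n))
    (hcauchy : ∀ ε : ℝ, 0 < ε → ∃ N, ∀ m ≥ N, ∀ n ≥ N, X.qnorm (u m - u n) ≤ ε)
    (hg : ∀ᵐ ω ∂μ, Tendsto (fun n => u n ω) atTop (𝓝 (g ω))) :
    Tendsto (fun n => X.qnorm (u n - g)) atTop (𝓝 0) := by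
  obtain ⟨f, hf, hlim⟩ := X.complete u hu hcauchy
  have hgf : g - f =ᵐ[μ] 0 := X.ae_eq_zero_of_tendsto_qnorm (fun n => X.mem_sub (hu n) hf) hlim
    (hg.mono fun ω hω => hω.sub_const (f ω))
  have hq : ∀ n, X.qnorm (u n - g) = X.qnorm (u n - f) := fun n => X.qnorm_congr _ _ <| by
    filter_upwards [hgf] with ω hω
    simp [sub_eq_zero.1 hω]
  simpa only [hq] using hlim

def HasAbsContNorm : Prop :=
  ∀ h, X.Mem h → ∀ E : ℕ → Set α, (∀ n, NullMeasurableSet (E n) μ) → Antitone E →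
    μ (⋂ n, E n) = 0 → Tendsto (fun n => X.qnorm ((E n).indicator h)) atTop (𝓝 0)

lemma ae_tendsto_indicator_of_antitone {β : Type*} [TopologicalSpace β] [Zero β]
    {E : ℕ → Set α} (hanti : Antitone E) (hnull : μ (⋂ n, E n) = 0) (f : α → β) :
    ∀ᵐ ω ∂μ, Tendsto (fun n => (E n).indicator f ω) atTop (𝓝 0) := by
  filter_upwards [measure_eq_zero_iff_ae_notMem.1 hnull] with ω hω
  have := (Antitone.tendsto_indicator E hanti f ω).mono_right (pure_le_nhds _)
  rwa [indicator_of_notMem hω] at this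

theorem not_separableFS_of_separated {ι : Type*} [Uncountable ι] {W : ι → α → ℂ} {c : ℝ}
    (hW : ∀ i, X.Mem (W i)) (hc : 0 < c) (hsep : Pairwise fun i j => c ≤ X.qnorm (W i - W j)) :
    ¬ SeparableFS X.Mem X.qnorm := by
  rintro ⟨D, hD, hDmem, hdense⟩
  choose d hdD hd using fun i => hdense (W i) (hW i) _ (div_pos hc (mul_pos two_pos X.Cq_pos))
  have : ¬ Injective fun i => (⟨d i, hdD i⟩ : D) := fun hinj =>
    haveI := hD.to_subtype
    not_countable hinj.countable
  obtain ⟨i, j, hdij, hij⟩ := not_injective_iff.1 this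
  have hdij : d i = d j := congrArg Subtype.val hdij
  have hclose : X.qnorm (d i - W j) < c / (2 * X.Cq) := by
    rw [hdij, X.qnorm_sub_comm]
    exact hd j
  exact (hsep hij).not_gt ((X.qnorm_sub_le (hW i) (hDmem _ (hdD i)) (hW j)).trans_lt
    (X.Cq_mul_add_lt (hd i) hclose))

theorem not_separableFS_of_pairwise_disjoint {h : α → ℂ} (hh : X.Mem h) {B : ℕ → Set α}
    (hB : ∀ i, NullMeasurableSet (B i) μ) (hdisj : Pairwise (Disjoint on B)) {c : ℝ} (hc : 0 < c)
    (hlarge : ∀ i, c ≤ X.qnorm ((B i).indicator h)) : ¬ SeparableFS X.Mem X.qnorm := by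
  have : Uncountable (Set ℕ) := ⟨fun _ => by
    obtain ⟨f, hf⟩ := Countable.exists_injective_nat (Set ℕ)
    exact cantor_injective f hf⟩
  set W : Set ℕ → α → ℂ := fun S => (⋃ i ∈ S, B i).indicator h
  have hW : ∀ S, X.Mem (W S) := fun S =>
    X.mem_indicator hh (.biUnion S.to_countable fun i _ => hB i)
  have hfar : ∀ S T i, i ∈ S → i ∉ T → c ≤ X.qnorm (W S - W T) := by
    intro S T i hiS hiT
    refine (hlarge i).trans (X.lattice_qnorm _ _ (X.mem_sub (hW S) (hW T))
      (Eventually.of_forall fun ω => ?_))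
    by_cases hω : ω ∈ B i
    · have hS : ω ∈ ⋃ j ∈ S, B j := mem_biUnion hiS hω
      have hT : ω ∉ ⋃ j ∈ T, B j := by
        simp only [mem_iUnion, not_exists]
        exact fun j hjT hωj =>
          disjoint_left.1 (hdisj (ne_of_mem_of_not_mem hjT hiT)) hωj hω
      simp [W, hω, hS, hT]
    · simp [hω]
  refine X.not_separableFS_of_separated hW hc fun S T hST => ?_
  obtain ⟨i, hi⟩ : ∃ i, ¬(i ∈ S ↔ i ∈ T) := by
    by_contra! h
    exact hST (Set.ext h)
  by_cases hiS : i ∈ S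
  · exact hfar S T i hiS fun hiT => hi ⟨fun _ => hiT, fun _ => hiS⟩
  · rw [X.qnorm_sub_comm]
    exact hfar T S i (by tauto) hiS

theorem hasAbsContNorm_of_separableFS (hX : SeparableFS X.Mem X.qnorm) : X.HasAbsContNorm := by
  intro h hh E hE hanti hnull
  have hmem : ∀ n, X.Mem ((E n).indicator h) := fun n => X.mem_indicator hh (hE n)
  have hcauchy : ∀ ε : ℝ, 0 < ε → ∃ N, ∀ m ≥ N, ∀ n ≥ N,
      X.qnorm ((E m).indicator h - (E n).indicator h) ≤ ε := by
    by_contra! hfar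
    obtain ⟨ε, hε, hfar⟩ := hfar
    have hblock : ∀ N, ∃ a b, N ≤ a ∧ a ≤ b ∧ ε < X.qnorm ((E a \ E b).indicator h) := by
      intro N
      obtain ⟨m, hm, n, hn, hmn⟩ := hfar N
      rcases le_total m n with hle | hle
      · exact ⟨m, n, hm, hle, by rwa [indicator_sdiff (hanti hle)]⟩
      · exact ⟨n, m, hn, hle, by rwa [indicator_sdiff (hanti hle), X.qnorm_sub_comm]⟩
    choose a b ha hab hlarge using hblock
    -- chain the far-apart blocks: the `i`-th lies in `E (N i) \ E (N (i + 1))`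
    set N : ℕ → ℕ := fun i => Nat.rec 0 (fun _ k => b k) i
    have hN : Monotone N := monotone_nat_of_le_succ fun i => (ha _).trans (hab _)
    refine X.not_separableFS_of_pairwise_disjoint hh (B := fun i => E (a (N i)) \ E (b (N i)))
      (fun i => (hE _).diff (hE _)) ?_ hε (fun i => (hlarge _).le) hX
    refine (pairwise_disjoint_on _).2 fun i j hij => disjoint_left.2 fun ω hωi hωj => hωi.2 ?_
    exact hanti (hN (Nat.succ_le_of_lt hij)) (hanti (ha _) hωj.1)
  simpa using X.tendsto_qnorm_sub_of_cauchy (g := 0) hmem hcauchy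
    (ae_tendsto_indicator_of_antitone hanti hnull h)

lemma qnorm_le_of_norm_le_smul_add_indicator {f g : α → ℂ} (hg : X.Mem g) {E : Set α}
    (hE : NullMeasurableSet E μ) {δ : ℝ} (hδ : 0 ≤ δ)
    (hfg : ∀ᵐ ω ∂μ, ‖f ω‖ ≤ δ * ‖g ω‖ + E.indicator (fun ω => ‖g ω‖) ω) :
    X.qnorm f ≤ X.Cq * (δ * X.qnorm g + X.qnorm (E.indicator g)) := by
  have hnorm : ∀ ω, ‖((δ : ℂ) • g + E.indicator g) ω‖ = δ * ‖g ω‖ + E.indicator (‖g ·‖) ω := by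
    intro ω
    by_cases hω : ω ∈ E
    · simp only [Pi.add_apply, Pi.smul_apply, smul_eq_mul, indicator_of_mem hω]
      rw [← add_one_mul, ← Complex.ofReal_one, ← Complex.ofReal_add, norm_mul, Complex.norm_real,
        Real.norm_of_nonneg (by positivity), add_one_mul]
    · simp [indicator_of_notMem hω, abs_of_nonneg hδ]
  have hmem := X.smul_mem (δ : ℂ) g hg
  have hsmul : X.qnorm ((δ : ℂ) • g) = δ * X.qnorm g := by
    rw [X.qnorm_smul, Complex.norm_real, Real.norm_of_nonneg hδ]
  calc X.qnorm f ≤ X.qnorm ((δ : ℂ) • g + E.indicator g) :=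
        X.lattice_qnorm _ _ (X.add_mem _ _ hmem (X.mem_indicator hg hE))
          (hfg.mono fun ω hω => (hnorm ω).symm ▸ hω)
    _ ≤ X.Cq * (δ * X.qnorm g + X.qnorm (E.indicator g)) :=
        hsmul ▸ X.qnorm_add_le _ _ hmem (X.mem_indicator hg hE)

lemma exists_norm_le_mul_add_indicator {f : ℕ → α → ℂ} (hf : ∀ n, AEMeasurable (f n) μ)
    (hdec : ∀ᵐ ω ∂μ, Antitone (fun n => ‖f n ω‖) ∧ Tendsto (fun n => ‖f n ω‖) atTop (𝓝 0))
    {δ : ℝ} (hδ : 0 < δ) :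
    ∃ E : ℕ → Set α, (∀ n, NullMeasurableSet (E n) μ) ∧ Antitone E ∧ μ (⋂ n, E n) = 0 ∧
      ∀ n, ∀ᵐ ω ∂μ, ‖f n ω‖ ≤ δ * ‖f 0 ω‖ + (E n).indicator (‖f 0 ·‖) ω := by
  set E : ℕ → Set α := fun n => {ω | ∀ k ≤ n, δ * ‖f 0 ω‖ < ‖f k ω‖}
  refine ⟨E, fun n => ?_, fun m n hmn ω hω k hk => hω k (hk.trans hmn), ?_, fun n => ?_⟩
  · simp only [E, ofPred_forall]
    exact .iInter fun k => .iInter fun _ =>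
      nullMeasurableSet_lt ((hf 0).norm.const_mul δ) (hf k).norm
  · refine measure_eq_zero_iff_ae_notMem.2 (hdec.mono fun ω hω hmem => ?_)
    have hlt : ∀ n, δ * ‖f 0 ω‖ < ‖f n ω‖ := fun n => mem_iInter.1 hmem n n le_rfl
    have hle : δ * ‖f 0 ω‖ ≤ 0 := ge_of_tendsto' hω.2 fun n => (hlt n).le
    have h0 : ‖f 0 ω‖ ≤ 0 := by
      by_contra! hpos
      linarith [mul_pos hδ hpos]
    linarith [hlt 0, mul_nonneg hδ.le (norm_nonneg (f 0 ω))]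
  · filter_upwards [hdec] with ω hω
    by_cases hωE : ω ∈ E n
    · rw [indicator_of_mem hωE]
      nlinarith [hω.1 (Nat.zero_le n), norm_nonneg (f 0 ω)]
    · obtain ⟨k, hk, hfk⟩ : ∃ k ≤ n, ‖f k ω‖ ≤ δ * ‖f 0 ω‖ := by simpa [E] using hωE
      rw [indicator_of_notMem hωE, add_zero]
      exact (hω.1 hk).trans hfk

theorem HasAbsContNorm.tendsto_qnorm {X : QBFS α μ} (hX : X.HasAbsContNorm) {f : ℕ → α → ℂ}
    (hf : ∀ n, X.Mem (f n))
    (hdec : ∀ᵐ ω ∂μ, Antitone (fun n => ‖f n ω‖) ∧ Tendsto (fun n => ‖f n ω‖) atTop (𝓝 0)) :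
    Tendsto (fun n => X.qnorm (f n)) atTop (𝓝 0) := by
  rw [Metric.tendsto_atTop]
  intro ε hε
  have hC := X.Cq_pos
  have hq0 := X.qnorm_nonneg (f 0)
  set δ := ε / (2 * X.Cq * (X.qnorm (f 0) + 1))
  obtain ⟨E, hE, hanti, hnull, hdom⟩ :=
    exists_norm_le_mul_add_indicator (fun n => X.mem_aemeasurable _ (hf n)) hdec
      (by positivity : 0 < δ)
  obtain ⟨N, hN⟩ := eventually_atTop.1 ((hX _ (hf 0) E hE hanti hnull).eventually
    (gt_mem_nhds (div_pos hε (mul_pos two_pos hC))))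
  refine ⟨N, fun n hn => ?_⟩
  rw [Real.dist_eq, sub_zero, abs_of_nonneg (X.qnorm_nonneg _)]
  refine (X.qnorm_le_of_norm_le_smul_add_indicator (hf 0) (hE n) (by positivity) (hdom n)).trans_lt
    (X.Cq_mul_add_lt ?_ (hN n hn))
  calc δ * X.qnorm (f 0) < δ * (X.qnorm (f 0) + 1) := by gcongr; linarith
    _ = ε / (2 * X.Cq) := by simp only [δ]; field_simp

theorem HasAbsContNorm.orderContFS {X : QBFS α μ} (hX : X.HasAbsContNorm) :
    OrderContFS μ X.Mem X.qnorm := by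
  intro f hf hae
  refine hX.tendsto_qnorm hf (hae.mono fun ω ⟨hdec, hlim⟩ => ?_)
  have hnorm : ∀ n, ‖f n ω‖ = (f n ω).re := fun n => by
    rw [← Complex.abs_re_eq_norm.2 (hdec n).1, abs_of_nonneg (hdec n).2.1]
  simp only [hnorm]
  exact ⟨antitone_nat_of_succ_le fun n => (hdec n).2.2, hlim⟩

theorem hasAbsContNorm_of_orderContFS (hX : OrderContFS μ X.Mem X.qnorm) : X.HasAbsContNorm := by
  intro h hh E hE hanti hnull
  set g : ℕ → α → ℂ := fun n ω => (((E n).indicator (‖h ·‖) ω : ℝ) : ℂ)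
  have hg_norm : ∀ n ω, ‖g n ω‖ = ‖(E n).indicator h ω‖ := fun n ω => by
    by_cases hω : ω ∈ E n <;> simp [g, hω]
  have hg : ∀ n, X.Mem (g n) := fun n =>
    X.lattice_mem _ _ (X.mem_indicator hh (hE n))
      (Complex.measurable_ofReal.comp_aemeasurable
        ((X.mem_aemeasurable h hh).norm.indicator₀ (hE n)))
      (Eventually.of_forall fun ω => (hg_norm n ω).le)
  refine squeeze_zero (fun n => X.qnorm_nonneg _)
    (fun n => X.lattice_qnorm _ _ (hg n) (Eventually.of_forall fun ω => (hg_norm n ω).ge))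
    (hX g hg ?_)
  filter_upwards [ae_tendsto_indicator_of_antitone hanti hnull (‖h ·‖)] with ω hω
  refine ⟨fun n => ⟨by simp [g], indicator_nonneg (fun _ _ => norm_nonneg _) _, ?_⟩,
    by simpa [g] using hω⟩
  simpa [g] using indicator_le_indicator_of_subset (hanti n.le_succ) (fun _ => norm_nonneg _) ω

theorem HasAbsContNorm.exists_qnorm_indicator_lt {X : QBFS α μ} (hX : X.HasAbsContNorm)
    {h : α → ℂ} (hh : X.Mem h) {θ : ℝ} (hθ : 0 < θ) :
    ∃ δ > (0 : ℝ≥0∞), ∀ T, MeasurableSet T → μ T < δ → X.qnorm (T.indicator h) < θ := by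
  by_contra! hbig
  choose T hT hTμ hTq using fun k : ℕ =>
    hbig ((2 : ℝ≥0∞)⁻¹ ^ k) (ENNReal.pow_pos (ENNReal.inv_pos.2 ENNReal.ofNat_ne_top) k)
  set R : ℕ → Set α := fun m => ⋃ k ≥ m, T k
  have hanti : Antitone R := fun m n hmn =>
    biUnion_mono (fun k hk => hmn.trans hk) fun _ _ => subset_rfl
  -- Borel–Cantelli: `⋂ m, R m = limsup T`
  have hnull : μ (⋂ m, R m) = 0 := by
    have hlimsup : limsup T atTop = ⋂ m, R m := limsup_eq_iInf_iSup_of_nat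
    rw [← hlimsup]
    refine measure_limsup_atTop_eq_zero (ne_top_of_le_ne_top ?_
      (ENNReal.tsum_le_tsum fun k => (hTμ k).le))
    rw [ENNReal.tsum_geometric, ENNReal.one_sub_inv_two, inv_inv]
    exact ENNReal.ofNat_ne_top
  have hR : ∀ m, NullMeasurableSet (R m) μ := fun m =>
    (MeasurableSet.biUnion (to_countable _) fun k _ => hT k).nullMeasurableSet
  refine hθ.not_ge (ge_of_tendsto' (hX h hh R hR hanti hnull) fun m => (hTq m).trans ?_)
  exact X.lattice_qnorm _ _ (X.mem_indicator hh (hR m)) (Eventually.of_forall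
    (norm_indicator_le_of_subset (subset_biUnion_of_mem (u := T) le_rfl) _))

theorem exists_exhaustion [SigmaFinite μ] :
    ∃ G : ℕ → Set α, Monotone G ∧ (∀ m, MeasurableSet (G m)) ∧ (∀ m, μ (G m) < ∞) ∧
      (∀ m, X.Mem ((G m).indicator 1)) ∧ μ (⋂ m, (G m)ᶜ) = 0 := by
  obtain ⟨w, hw, hwpos⟩ := X.exists_weak_unit
  have hwm := X.mem_aemeasurable w hw
  set G : ℕ → Set α := fun m => spanningSets μ m ∩ {ω | 1 ≤ (m + 1) * ‖hwm.mk w ω‖}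
  have hGmeas : ∀ m, MeasurableSet (G m) := fun m => (measurableSet_spanningSets μ m).inter
    (measurableSet_le measurable_const (measurable_const.mul hwm.measurable_mk.norm))
  refine ⟨G, fun m n hmn => ?_, hGmeas, fun m => ?_, fun m => ?_, ?_⟩
  · refine Set.inter_subset_inter (monotone_spanningSets μ hmn) fun ω hω => ?_
    exact le_trans (α := ℝ) hω (by gcongr)
  · exact (measure_mono Set.inter_subset_left).trans_lt (measure_spanningSets_lt_top μ m)
  · refine X.lattice_mem (((m : ℂ) + 1) • w) _ (X.smul_mem _ _ hw)
      (measurable_const.indicator (hGmeas m)).aemeasurable ?_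
    filter_upwards [hwm.ae_eq_mk] with ω hω
    have hm : ‖(m : ℂ) + 1‖ = m + 1 := by exact_mod_cast Complex.norm_natCast (m + 1)
    by_cases hωG : ω ∈ G m
    · simpa [indicator_of_mem hωG, hω, hm] using hωG.2
    · simp [indicator_of_notMem hωG]
      positivity
  · refine measure_eq_zero_iff_ae_notMem.2 ?_
    filter_upwards [hwpos, hwm.ae_eq_mk] with ω hpos hω hmem
    rw [hω] at hpos
    obtain ⟨k, hk⟩ := exists_nat_ge ‖hwm.mk w ω‖⁻¹
    set m := max (spanningSetsIndex μ ω) k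
    refine mem_iInter.1 hmem m ⟨monotone_spanningSets μ (le_max_left _ _)
      (mem_spanningSetsIndex μ ω), ?_⟩
    have : ‖hwm.mk w ω‖⁻¹ ≤ m + 1 := hk.trans (by simp [m]; norm_cast; omega)
    exact (inv_le_iff_one_le_mul₀ hpos).1 this

def ApproxBy (D : Set (α → ℂ)) (f : α → ℂ) : Prop :=
  ∀ ε : ℝ, 0 < ε → ∃ d ∈ D, X.qnorm (f - d) < ε

section ApproxBy

variable {X} {D : Set (α → ℂ)}

theorem approxBy_of_forall_approxBy (hD : ∀ d ∈ D, X.Mem d) {f : α → ℂ} (hf : X.Mem f)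
    (h : ∀ ε : ℝ, 0 < ε → ∃ g, X.Mem g ∧ X.qnorm (f - g) < ε ∧ X.ApproxBy D g) :
    X.ApproxBy D f := by
  intro ε hε
  have hε' : 0 < ε / (2 * X.Cq) := div_pos hε (mul_pos two_pos X.Cq_pos)
  obtain ⟨g, hg, hfg, hgD⟩ := h _ hε'
  obtain ⟨d, hd, hgd⟩ := hgD _ hε'
  exact ⟨d, hd, (X.qnorm_sub_le hf hg (hD d hd)).trans_lt (X.Cq_mul_add_lt hfg hgd)⟩

theorem ApproxBy.add (hD : ∀ d ∈ D, X.Mem d) (hDadd : ∀ d ∈ D, ∀ e ∈ D, d + e ∈ D)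
    {f g : α → ℂ} (hf : X.Mem f) (hg : X.Mem g) (hfD : X.ApproxBy D f) (hgD : X.ApproxBy D g) :
    X.ApproxBy D (f + g) := by
  intro ε hε
  have hε' : 0 < ε / (2 * X.Cq) := div_pos hε (mul_pos two_pos X.Cq_pos)
  obtain ⟨d, hd, hfd⟩ := hfD _ hε'
  obtain ⟨e, he, hge⟩ := hgD _ hε'
  refine ⟨d + e, hDadd d hd e he, ?_⟩
  rw [add_sub_add_comm]
  exact (X.qnorm_add_le _ _ (X.mem_sub hf (hD d hd)) (X.mem_sub hg (hD e he))).trans_lt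
    (X.Cq_mul_add_lt hfd hge)

theorem approxBy_sum (hD : ∀ d ∈ D, X.Mem d) (hD0 : 0 ∈ D)
    (hDadd : ∀ d ∈ D, ∀ e ∈ D, d + e ∈ D) {ι : Type*} (s : Finset ι) {f : ι → α → ℂ}
    (hf : ∀ i ∈ s, X.Mem (f i) ∧ X.ApproxBy D (f i)) : X.ApproxBy D (∑ i ∈ s, f i) := by
  refine (Finset.sum_induction f (fun g => X.Mem g ∧ X.ApproxBy D g)
    (fun g g' hg hg' => ⟨X.add_mem _ _ hg.1 hg'.1, hg.2.add hD hDadd hg.1 hg'.1 hg'.2⟩)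
    ⟨X.mem_zero, fun ε hε => ⟨0, hD0, by simpa [X.qnorm_zero] using hε⟩⟩ hf).2

end ApproxBy

def indicatorSums {β ι : Type*} (c : ℕ → ℂ) (B : ι → Set β) : Set (β → ℂ) :=
  range fun l : List (ℕ × ι) => (l.map fun p => c p.1 • (B p.2).indicator 1).sum

section indicatorSums

variable {β ι : Type*} (c : ℕ → ℂ) (B : ι → Set β)

lemma countable_indicatorSums [Countable ι] : (indicatorSums c B).Countable :=
  countable_range _

lemma zero_mem_indicatorSums : 0 ∈ indicatorSums c B := ⟨[], rfl⟩

lemma add_mem_indicatorSums {d e : β → ℂ} (hd : d ∈ indicatorSums c B)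
    (he : e ∈ indicatorSums c B) : d + e ∈ indicatorSums c B := by
  obtain ⟨l, rfl⟩ := hd
  obtain ⟨l', rfl⟩ := he
  exact ⟨l ++ l', by simp⟩

lemma smul_indicator_mem_indicatorSums (j : ℕ) (i : ι) :
    c j • (B i).indicator 1 ∈ indicatorSums c B := ⟨[(j, i)], by simp⟩

end indicatorSums

lemma mem_of_mem_indicatorSums {X : QBFS α μ} {ι : Type*} {c : ℕ → ℂ} {B : ι → Set α}
    (hB : ∀ i, X.Mem ((B i).indicator 1)) {d : α → ℂ} (hd : d ∈ indicatorSums c B) : X.Mem d := by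
  obtain ⟨l, rfl⟩ := hd
  induction l with
  | nil => exact X.mem_zero
  | cons p l ih => exact X.add_mem _ _ (X.smul_mem _ _ (hB p.2)) ih

lemma norm_indicator_biUnion_sub_sum_le {β ι : Type*} {s : Finset ι} {S : ι → Set β}
    (hS : (s : Set ι).PairwiseDisjoint S) {f : β → ℂ} {c : ι → ℂ} {η : ℝ}
    (hfc : ∀ i ∈ s, ∀ ω ∈ S i, ‖f ω - c i‖ ≤ η) (ω : β) :
    ‖(⋃ i ∈ s, S i).indicator f ω - (∑ i ∈ s, c i • (S i).indicator 1) ω‖ ≤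
      (⋃ i ∈ s, S i).indicator (fun _ => η) ω := by
  rw [Finset.indicator_biUnion s S hS, Finset.indicator_biUnion s S hS, Finset.sum_apply,
    ← Finset.sum_sub_distrib]
  refine (norm_sum_le _ _).trans (Finset.sum_le_sum fun i hi => ?_)
  by_cases hω : ω ∈ S i
  · simpa [hω] using hfc i hi ω hω
  · simp [hω]

theorem HasAbsContNorm.exists_qnorm_smul_indicator_sub_lt {X : QBFS α μ} (hX : X.HasAbsContNorm)
    {A : ℕ → Set α} (hAmeas : ∀ n, MeasurableSet (A n))
    (hA : ∀ E, MeasurableSet E → μ E < ∞ → ∀ ε : ℝ≥0∞, 0 < ε → ∃ n, μ (symmDiff (A n) E) < ε)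
    {G : Set α} (hGmem : X.Mem (G.indicator 1)) (hGfin : μ G < ∞) {S : Set α}
    (hS : MeasurableSet S) (hSG : S ⊆ G) (c : ℂ) {ε : ℝ} (hε : 0 < ε) :
    ∃ n, X.qnorm (c • S.indicator 1 - c • (A n ∩ G).indicator 1) < ε := by
  obtain ⟨δ, hδ, hsmall⟩ := hX.exists_qnorm_indicator_lt hGmem
    (div_pos hε (by positivity : 0 < ‖c‖ + 1))
  obtain ⟨n, hn⟩ := hA S hS ((measure_mono hSG).trans_lt hGfin) δ hδ
  have hdom : ∀ ω, ‖(S.indicator 1 - (A n ∩ G).indicator 1 : α → ℂ) ω‖ ≤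
      ‖(symmDiff (A n) S).indicator (G.indicator (1 : α → ℂ)) ω‖ := fun ω => by
    by_cases hωS : ω ∈ S
    · by_cases hωA : ω ∈ A n <;> simp [Set.mem_symmDiff, hωS, hωA, hSG hωS]
    · by_cases hωA : ω ∈ A n <;> by_cases hωG : ω ∈ G <;> simp [Set.mem_symmDiff, hωS, hωA, hωG]
  have hq : X.qnorm (S.indicator 1 - (A n ∩ G).indicator 1) < ε / (‖c‖ + 1) :=
    (X.lattice_qnorm _ _ (X.mem_indicator hGmem ((hAmeas n).symmDiff hS).nullMeasurableSet)
      (Eventually.of_forall hdom)).trans_lt (hsmall _ ((hAmeas n).symmDiff hS) hn)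
  refine ⟨n, ?_⟩
  rw [← smul_sub, X.qnorm_smul]
  calc ‖c‖ * X.qnorm (S.indicator 1 - (A n ∩ G).indicator 1) ≤ ‖c‖ * (ε / (‖c‖ + 1)) := by
        gcongr
    _ < ε := by
        rw [mul_div_assoc', div_lt_iff₀ (by positivity)]
        nlinarith

lemma exists_partition_norm_sub_le {G : Set α} (hG : MeasurableSet G) {f : α → ℂ}
    (hf : Measurable f) {c : ℕ → ℂ} (hc : DenseRange c) {η : ℝ} (hη : 0 < η) :
    ∃ S : ℕ → Set α, (∀ j, MeasurableSet (S j)) ∧ Pairwise (Disjoint on S) ∧ (∀ j, S j ⊆ G) ∧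
      ⋃ j, S j = G ∧ ∀ j, ∀ ω ∈ S j, ‖f ω - c j‖ ≤ η := by
  refine ⟨disjointed fun j => G ∩ f ⁻¹' Metric.ball (c j) η,
    .disjointed fun j => hG.inter (hf Metric.isOpen_ball.measurableSet), disjoint_disjointed _,
    fun j => (disjointed_subset _ j).trans Set.inter_subset_left, ?_,
    fun j ω hω => (mem_ball_iff_norm.1 (disjointed_subset _ j hω).2).le⟩
  rw [iUnion_disjointed, ← inter_iUnion, inter_eq_left]
  intro ω _
  obtain ⟨j, hj⟩ := Metric.denseRange_iff.1 hc (f ω) η hη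
  exact mem_iUnion.2 ⟨j, hj⟩

theorem HasAbsContNorm.tendsto_qnorm_indicator_sdiff {X : QBFS α μ} (hX : X.HasAbsContNorm)
    {f : α → ℂ} (hf : X.Mem f) {G : Set α} (hG : NullMeasurableSet G μ) {F : ℕ → Set α}
    (hF : ∀ n, NullMeasurableSet (F n) μ) (hmono : Monotone F) (hnull : μ (G \ ⋃ n, F n) = 0) :
    Tendsto (fun n => X.qnorm ((G \ F n).indicator f)) atTop (𝓝 0) :=
  hX f hf _ (fun n => hG.diff (hF n)) (fun _ _ hmn => sdiff_subset_sdiff_right (hmono hmn))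
    (by rwa [← sdiff_iUnion])

lemma qnorm_indicator_biUnion_sub_sum_le {G : Set α} (hG : X.Mem (G.indicator 1)) {ι : Type*}
    {s : Finset ι} {S : ι → Set α} (hS : (s : Set ι).PairwiseDisjoint S) (hSG : ∀ i ∈ s, S i ⊆ G)
    {f : α → ℂ} {c : ι → ℂ} {η : ℝ} (hη : 0 ≤ η) (hfc : ∀ i ∈ s, ∀ ω ∈ S i, ‖f ω - c i‖ ≤ η) :
    X.qnorm ((⋃ i ∈ s, S i).indicator f - ∑ i ∈ s, c i • (S i).indicator 1) ≤
      η * X.qnorm (G.indicator 1) := by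
  rw [← Real.norm_of_nonneg hη, ← Complex.norm_real, ← X.qnorm_smul]
  refine X.lattice_qnorm _ _ (X.smul_mem _ _ hG) (Eventually.of_forall fun ω => ?_)
  refine (norm_indicator_biUnion_sub_sum_le hS hfc ω).trans ?_
  by_cases hω : ω ∈ ⋃ i ∈ s, S i
  · obtain ⟨i, hi, hωi⟩ := mem_iUnion₂.1 hω
    simp [indicator_of_mem hω, indicator_of_mem (hSG i hi hωi), abs_of_nonneg hη]
  · rw [indicator_of_notMem hω]
    exact norm_nonneg _

theorem HasAbsContNorm.approxBy_indicator {X : QBFS α μ} (hX : X.HasAbsContNorm)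
    {D : Set (α → ℂ)} (hD : ∀ d ∈ D, X.Mem d) (hD0 : 0 ∈ D) (hDadd : ∀ d ∈ D, ∀ e ∈ D, d + e ∈ D)
    {G : Set α} (hG : MeasurableSet G) (hGmem : X.Mem (G.indicator 1)) {c : ℕ → ℂ}
    (hc : DenseRange c)
    (hcD : ∀ S, MeasurableSet S → S ⊆ G → ∀ j, X.ApproxBy D (c j • S.indicator 1))
    {f : α → ℂ} (hf : X.Mem f) (hfm : Measurable f) : X.ApproxBy D (G.indicator f) := by
  refine approxBy_of_forall_approxBy hD (X.mem_indicator hf hG.nullMeasurableSet) fun ε hε => ?_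
  have hC := X.Cq_pos
  have hq1 := X.qnorm_nonneg (G.indicator 1)
  set η := ε / (2 * X.Cq * (X.qnorm (G.indicator 1) + 1))
  obtain ⟨S, hSmeas, hSdisj, hSG, hcover, hSf⟩ :=
    exists_partition_norm_sub_le hG hfm hc (by positivity : 0 < η)
  set U : ℕ → Set α := fun J => ⋃ j ∈ Finset.range J, S j
  have hUmeas : ∀ J, MeasurableSet (U J) := fun J =>
    Finset.measurableSet_biUnion _ fun j _ => hSmeas j
  have hUG : ∀ J, U J ⊆ G := fun J => iUnion₂_subset fun j _ => hSG j
  have hrest := hX.tendsto_qnorm_indicator_sdiff hf hG.nullMeasurableSet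
    (fun J => (hUmeas J).nullMeasurableSet)
    (fun J J' hJ => iUnion₂_mono' fun j hj => ⟨j, Finset.range_mono hJ hj, subset_rfl⟩) <| by
      refine measure_mono_null (fun ω hω => hω.2 ?_) measure_empty
      obtain ⟨j, hj⟩ := mem_iUnion.1 (hcover ▸ hω.1 : ω ∈ ⋃ j, S j)
      exact mem_iUnion.2 ⟨j + 1, mem_iUnion₂.2 ⟨j, Finset.self_mem_range_succ j, hj⟩⟩
  obtain ⟨J, hJ⟩ := (hrest.eventually (gt_mem_nhds (div_pos hε (mul_pos two_pos hC)))).exists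
  have hpiece : ∀ j, X.Mem ((S j).indicator 1) := fun j =>
    X.mem_indicator_one_of_subset hGmem (hSmeas j) (hSG j)
  set g : α → ℂ := ∑ j ∈ Finset.range J, c j • (S j).indicator 1
  have hg : X.Mem g := Finset.sum_induction _ X.Mem (fun _ _ => X.add_mem _ _) X.mem_zero
    fun j _ => X.smul_mem _ _ (hpiece j)
  have hunif : X.qnorm ((U J).indicator f - g) < ε / (2 * X.Cq) := by
    refine (X.qnorm_indicator_biUnion_sub_sum_le hGmem (hSdisj.set_pairwise _)
      (fun j _ => hSG j) (by positivity) fun j _ => hSf j).trans_lt ?_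
    calc η * X.qnorm (G.indicator 1) < η * (X.qnorm (G.indicator 1) + 1) := by
          gcongr; linarith
      _ = ε / (2 * X.Cq) := by simp only [η]; field_simp
  have hsplit : G.indicator f - g = (G \ U J).indicator f + ((U J).indicator f - g) := by
    rw [indicator_sdiff (hUG J)]
    abel
  refine ⟨g, hg, ?_, approxBy_sum hD hD0 hDadd _ fun j _ =>
    ⟨X.smul_mem _ _ (hpiece j), hcD _ (hSmeas j) (hSG j) j⟩⟩
  rw [hsplit]
  exact (X.qnorm_add_le _ _ (X.mem_indicator hf (hG.diff (hUmeas J)).nullMeasurableSet)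
    (X.mem_sub (X.mem_indicator hf (hUmeas J).nullMeasurableSet) hg)).trans_lt
    (X.Cq_mul_add_lt hJ hunif)

theorem HasAbsContNorm.separableFS [SigmaFinite μ] (hμ : MeasSeparable μ) {X : QBFS α μ}
    (hX : X.HasAbsContNorm) : SeparableFS X.Mem X.qnorm := by
  obtain ⟨A, hAmeas, hA⟩ := hμ
  obtain ⟨G, hGmono, hGmeas, hGfin, hGmem, hGnull⟩ := X.exists_exhaustion
  obtain ⟨c, hc⟩ : ∃ c : ℕ → ℂ, DenseRange c :=
    ⟨_, TopologicalSpace.denseRange_denseSeq ℂ⟩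
  set D := indicatorSums c fun p : ℕ × ℕ => A p.1 ∩ G p.2
  have hD : ∀ d ∈ D, X.Mem d := fun d => mem_of_mem_indicatorSums (c := c)
    (B := fun p : ℕ × ℕ => A p.1 ∩ G p.2) fun p =>
    X.mem_indicator_one_of_subset (hGmem p.2) ((hAmeas _).inter (hGmeas _)) Set.inter_subset_right
  have hcD : ∀ N S, MeasurableSet S → S ⊆ G N → ∀ j, X.ApproxBy D (c j • S.indicator 1) := by
    intro N S hS hSG j ε hε
    obtain ⟨n, hn⟩ := hX.exists_qnorm_smul_indicator_sub_lt hAmeas hA (hGmem N) (hGfin N) hS hSG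
      (c j) hε
    exact ⟨_, smul_indicator_mem_indicatorSums c _ j (n, N), hn⟩
  refine ⟨D, countable_indicatorSums _ _, hD, fun f hf => ?_⟩
  have hfm := X.mem_aemeasurable f hf
  have hf' : X.Mem (hfm.mk f) := X.mem_congr _ _ hf hfm.ae_eq_mk
  -- `f` is the limit of the restrictions of its measurable version to `G N`
  have htail := hX _ hf' _ (fun N => (hGmeas N).compl.nullMeasurableSet)
    (fun _ _ h => compl_subset_compl.2 (hGmono h)) hGnull
  refine approxBy_of_forall_approxBy hD hf fun ε hε => ?_
  obtain ⟨N, hN⟩ := (htail.eventually (gt_mem_nhds hε)).exists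
  refine ⟨(G N).indicator (hfm.mk f), X.mem_indicator hf' (hGmeas N).nullMeasurableSet, ?_,
    hX.approxBy_indicator hD (zero_mem_indicatorSums _ _) (fun _ hd _ he =>
      add_mem_indicatorSums _ _ hd he) (hGmeas N) (hGmem N)
      hc (hcD N) hf' hfm.measurable_mk⟩
  rwa [X.qnorm_congr _ _ (hfm.ae_eq_mk.sub (EventuallyEq.refl _ _)), ← indicator_compl]

end QBFS

/-- Over a separable σ-finite measure space, a quasi-Banach function space is
separable if and only if it is order continuous. -/
theorem qbfs_separable_iff_order_continuous
    [MeasureTheory.SigmaFinite μ] (hμ : MeasSeparable μ) (X : QBFS α μ) :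
    SeparableFS X.Mem X.qnorm ↔ OrderContFS μ X.Mem X.qnorm :=
  ⟨fun h => (X.hasAbsContNorm_of_separableFS h).orderContFS,
    fun h => (X.hasAbsContNorm_of_orderContFS h).separableFS hμ⟩
end
end
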